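/- The number of labeled trees on n vertices equals the number of functions from {2,...,n-1} to {1,...,n}, for n >= 2. -/

import Mathlib

/-!
Joyal's proof. A *vertebrate* is a tree with two marked vertices `start` and `root`; there are
`n ^ 2 * t` of them if `t` is the number of trees. Orient the tree towards `root`, so that it
becomes a map `f` every orbit of which ends at the fixed point `root`. Cutting the spine (the path
from `start` to `root`) out of the tree leaves a linear order on the spine and a rooted forest whose
roots are the spine vertices. Likewise, an arbitrary self-map `g` of `V` is the same as a
permutation of its periodic points together with a rooted forest whose roots are the periodic
points. Since a set with `k` elements has `k!` linear orders and `k!` permutations, summing over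
the root set gives `n ^ 2 * t = n ^ n`.
-/

open Equiv Function Set
open scoped Nat

namespace Function

variable {V : Type*}

theorem exists_iterate_mem_periodicPts [Finite V] (f : V → V) (x : V) :
    ∃ k, f^[k] x ∈ periodicPts f := by
  obtain ⟨i, j, hij, h⟩ := Finite.exists_ne_map_eq_of_infinite (f^[·] x)
  wlog hlt : i < j generalizing i j
  · exact this j i hij.symm h.symm (by omega)
  refine ⟨i, mk_mem_periodicPts (n := j - i) (by omega) ?_⟩
  rw [IsPeriodicPt, IsFixedPt, ← iterate_add_apply, Nat.sub_add_cancel hlt.le]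
  exact h.symm

theorem exists_iterate_mem_of_eqOn_compl {f g : V → V} {S : Set V} (hfg : ∀ x ∉ S, g x = f x)
    {x : V} {k : ℕ} (hk : f^[k] x ∈ S) : ∃ j, g^[j] x ∈ S := by
  induction k generalizing x with
  | zero => exact ⟨0, hk⟩
  | succ k ih =>
    by_cases hx : x ∈ S
    · exact ⟨0, hx⟩
    obtain ⟨j, hj⟩ := ih (x := f x) hk
    exact ⟨j + 1, by rwa [iterate_succ_apply, hfg x hx]⟩

theorem mem_of_mem_periodicPts_of_iterate_mem {f : V → V} {S : Set V} (hS : MapsTo f S S)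
    {x : V} (hx : x ∈ periodicPts f) {k : ℕ} (hk : f^[k] x ∈ S) : x ∈ S := by
  obtain ⟨n, hn, hper⟩ := hx
  have hx : f^[(n - 1) * k] (f^[k] x) = x := by
    rw [← iterate_add_apply, ← Nat.succ_mul, Nat.succ_eq_add_one, Nat.sub_add_cancel hn]
    exact (hper.mul_const k).eq
  exact hx ▸ hS.iterate _ hk

end Function

namespace SimpleGraph

variable {V : Type*}

theorem IsTree.eq_of_le [Finite V] {G H : SimpleGraph V} (hG : G.IsTree) (hH : H.IsTree)
    (hle : G ≤ H) : G = H := by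
  have hGcard := (isTree_iff_connected_and_card.1 hG).2
  have hHcard := (isTree_iff_connected_and_card.1 hH).2
  rw [Nat.card_coe_set_eq] at hGcard hHcard
  exact edgeSet_inj.1 <|
    Set.eq_of_subset_of_ncard_le (edgeSet_subset_edgeSet.2 hle) (by omega) (Set.toFinite _)

theorem Connected.exists_adj_dist_add_one {G : SimpleGraph V} (hG : G.Connected) {v r : V}
    (hv : v ≠ r) : ∃ w, G.Adj v w ∧ G.dist w r + 1 = G.dist v r := by
  obtain ⟨p, hp⟩ := hG.exists_walk_length_eq_dist v r
  cases p with
  | nil => exact absurd rfl hv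
  | cons hadj q =>
    obtain ⟨q', hq'⟩ := hG.exists_walk_length_eq_dist _ r
    have h1 := dist_le q
    have h2 := dist_le (.cons hadj q')
    simp only [Walk.length_cons] at hp h2
    exact ⟨_, hadj, by omega⟩

end SimpleGraph

namespace Cayley

variable {V : Type*}

/-- `f` is the parent map of a forest whose roots are the points of `S`. -/
def IsRootedForest (f : V → V) (S : Set V) : Prop :=
  (∀ x ∈ S, f x = x) ∧ ∀ x, ∃ k, f^[k] x ∈ S

namespace IsRootedForest

variable {f : V → V} {S : Set V}

theorem mapsTo (h : IsRootedForest f S) : MapsTo f S S :=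
  fun x hx => (h.1 x hx).symm ▸ hx

theorem mem_of_mem_periodicPts (h : IsRootedForest f S) {x : V} (hx : x ∈ periodicPts f) :
    x ∈ S :=
  mem_of_mem_periodicPts_of_iterate_mem h.mapsTo hx (h.2 x).choose_spec

theorem mem_of_isFixedPt (h : IsRootedForest f S) {x : V} (hx : f x = x) : x ∈ S :=
  iterate_fixed hx _ ▸ (h.2 x).choose_spec

theorem nonempty [Nonempty V] (h : IsRootedForest f S) : S.Nonempty :=
  ⟨_, (h.2 (Classical.arbitrary V)).choose_spec⟩

theorem piecewise_id_eq [DecidablePred (· ∈ S)] {g : V → V} (h : IsRootedForest f S)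
    (hg : ∀ x ∉ S, g x = f x) : S.piecewise id g = f := by
  ext x
  by_cases hx : x ∈ S
  · simp [hx, h.1 x hx]
  · simp [hx, hg x hx]

end IsRootedForest

theorem isRootedForest_piecewise_id {f : V → V} {S : Set V} [DecidablePred (· ∈ S)]
    (h : ∀ x, ∃ k, f^[k] x ∈ S) : IsRootedForest (S.piecewise id f) S := by
  refine ⟨fun x hx => piecewise_eq_of_mem _ _ _ hx, fun x => ?_⟩
  obtain ⟨k, hk⟩ := h x
  exact exists_iterate_mem_of_eqOn_compl (f := f) (fun y hy => piecewise_eq_of_notMem _ _ _ hy) hk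

section PeriodicPoints

variable [Finite V] {S : Set V} [DecidablePred (· ∈ S)]

def permGlue (σ : Perm S) (r : V → V) (x : V) : V :=
  if hx : x ∈ S then σ ⟨x, hx⟩ else r x

theorem periodicPts_permGlue (σ : Perm S) {r : V → V} (hr : IsRootedForest r S) :
    periodicPts (permGlue σ r) = S := by
  have hmaps : MapsTo (permGlue σ r) S S := fun x hx => by simp [permGlue, hx]
  refine Subset.antisymm (fun x hx => ?_) (fun x hx => ?_)
  · obtain ⟨j, hj⟩ := exists_iterate_mem_of_eqOn_compl (g := permGlue σ r)
      (fun y hy => dif_neg hy) (hr.2 x).choose_spec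
    exact mem_of_mem_periodicPts_of_iterate_mem hmaps hx hj
  · have hsemi : Semiconj Subtype.val σ (permGlue σ r) := fun y => by simp [permGlue]
    exact hsemi.mapsTo_periodicPts (σ.injective.mem_periodicPts ⟨x, hx⟩)

theorem isRootedForest_piecewise_of_periodicPts_eq {g : V → V} (hg : periodicPts g = S) :
    IsRootedForest (S.piecewise id g) S :=
  isRootedForest_piecewise_id fun x => hg ▸ exists_iterate_mem_periodicPts g x

noncomputable def periodicPtsEquiv :
    {g : V → V // periodicPts g = S} ≃ Perm S × {r : V → V // IsRootedForest r S} where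
  toFun g := ((g.2 ▸ bijOn_periodicPts g.1).equiv g.1,
    ⟨S.piecewise id g.1, isRootedForest_piecewise_of_periodicPts_eq g.2⟩)
  invFun p := ⟨permGlue p.1 p.2.1, periodicPts_permGlue p.1 p.2.2⟩
  left_inv g := by
    ext x
    by_cases hx : x ∈ S
    · simp only [permGlue, dif_pos hx]
      rfl
    · simp [permGlue, hx]
  right_inv p := by
    obtain ⟨σ, r, hr⟩ := p
    refine Prod.ext (Equiv.ext fun x => Subtype.ext ?_) (Subtype.ext ?_)
    · show permGlue σ r x = σ x
      simp [permGlue]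
    · exact hr.piecewise_id_eq fun x hx => dif_neg hx

end PeriodicPoints

theorem card_fun_eq_sum [Fintype V] :
    Nat.card (V → V) =
      ∑ S : Set V, (Nat.card S)! * Nat.card {r : V → V // IsRootedForest r S} := by
  classical
  rw [← Nat.card_congr (Equiv.sigmaFiberEquiv (periodicPts : (V → V) → Set V)), Nat.card_sigma]
  refine Finset.sum_congr rfl fun S _ => ?_
  rw [Nat.card_congr periodicPtsEquiv, Nat.card_prod, Nat.card_perm]

section Graft

variable [DecidableEq V] {l : List V} {r : V → V}

/-- Reads `l` as the path `l[0] → l[1] → ⋯`, its last entry fixed, and follows `r` off `l`. -/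
def graft (l : List V) (r : V → V) (x : V) : V :=
  if x ∈ l then l.getD (l.idxOf x + 1) x else r x

theorem graft_of_notMem {x : V} (hx : x ∉ l) : graft l r x = r x := if_neg hx

theorem graft_getElem (hl : l.Nodup) {i : ℕ} (hi : i < l.length) :
    graft l r l[i] = l.getD (i + 1) l[i] := by
  rw [graft, if_pos (List.getElem_mem _), hl.idxOf_getElem]

theorem iterate_graft_getElem (hl : l.Nodup) {i j : ℕ} (h : i + j < l.length) :
    (graft l r)^[j] l[i] = l[i + j] := by
  induction j with
  | zero => rfl
  | succ j ih =>
    rw [iterate_succ_apply', ih (by omega), graft_getElem hl,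
      List.getD_eq_getElem _ _ (by omega : i + j + 1 < l.length)]
    rfl

theorem iterate_graft_head (hl : l.Nodup) (h : l ≠ []) {j : ℕ} (hj : j < l.length) :
    (graft l r)^[j] (l.head h) = l[j] := by
  rw [List.head_eq_getElem, iterate_graft_getElem hl (by omega)]
  simp

theorem graft_getLast (hl : l.Nodup) (h : l ≠ []) : graft l r (l.getLast h) = l.getLast h := by
  rw [List.getLast_eq_getElem, graft_getElem hl, List.getD_eq_default _ _ (by omega)]

theorem isRootedForest_graft (hl : l.Nodup) (h : l ≠ []) (hr : IsRootedForest r {x | x ∈ l}) :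
    IsRootedForest (graft l r) {l.getLast h} := by
  refine ⟨fun x hx => hx ▸ graft_getLast hl h, fun x => ?_⟩
  obtain ⟨j, hj⟩ := exists_iterate_mem_of_eqOn_compl (f := r) (g := graft l r)
    (fun y hy => graft_of_notMem hy) (hr.2 x).choose_spec
  obtain ⟨i, hi, hij⟩ := List.mem_iff_getElem.1 hj
  refine ⟨(l.length - 1 - i) + j, ?_⟩
  rw [iterate_add_apply, ← hij, iterate_graft_getElem hl (by omega), List.getLast_eq_getElem]
  simp only [mem_singleton_iff]
  congr 1
  omega

end Graft

/-- A tree with two marked vertices, given by its parent map towards `root`. -/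
@[ext]
structure Vertebrate (V : Type*) where
  start : V
  root : V
  toFun : V → V
  isRootedForest : IsRootedForest toFun {root}

def vertebrateEquiv : Vertebrate V ≃ V × Σ b : V, {f : V → V // IsRootedForest f {b}} where
  toFun x := (x.start, ⟨x.root, x.toFun, x.isRootedForest⟩)
  invFun p := ⟨p.1, p.2.1, p.2.2.1, p.2.2.2⟩

instance [Finite V] : Finite (Vertebrate V) :=
  Finite.of_equiv _ vertebrateEquiv.symm

namespace Vertebrate

variable (x : Vertebrate V)

theorem exists_iterate_start_eq_root : ∃ k, x.toFun^[k] x.start = x.root :=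
  x.isRootedForest.2 x.start

variable [DecidableEq V]

def spine : List V :=
  List.iterate x.toFun x.start (Nat.find x.exists_iterate_start_eq_root + 1)

theorem length_spine : x.spine.length = Nat.find x.exists_iterate_start_eq_root + 1 :=
  List.length_iterate ..

theorem getElem_spine {i : ℕ} (hi : i < x.spine.length) : x.spine[i] = x.toFun^[i] x.start :=
  List.getElem_iterate ..

theorem spine_ne_nil : x.spine ≠ [] :=
  List.ne_nil_of_length_pos (by rw [length_spine]; omega)

theorem head_spine : x.spine.head x.spine_ne_nil = x.start := by
  rw [List.head_eq_getElem, getElem_spine]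
  rfl

theorem getLast_spine : x.spine.getLast x.spine_ne_nil = x.root := by
  rw [List.getLast_eq_getElem, getElem_spine]
  simpa [length_spine] using Nat.find_spec x.exists_iterate_start_eq_root

theorem getElem_spine_of_length_le {i : ℕ} (hi : i < x.spine.length)
    (hlast : x.spine.length ≤ i + 1) : x.spine[i] = x.root := by
  rw [← x.getLast_spine, List.getLast_eq_getElem]
  congr 1
  omega

theorem spine_nodup : x.spine.Nodup := by
  have hfind := Nat.find_spec x.exists_iterate_start_eq_root
  refine List.pairwise_iff_getElem.2 fun i j hi hj hij heq => ?_
  rw [getElem_spine, getElem_spine] at heq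
  rw [length_spine] at hj
  refine Nat.find_min x.exists_iterate_start_eq_root
    (m := Nat.find x.exists_iterate_start_eq_root - j + i) (by omega) ?_
  rw [iterate_add_apply, heq, ← iterate_add_apply, Nat.sub_add_cancel (by omega), hfind]

theorem exists_iterate_mem_spine (y : V) : ∃ k, x.toFun^[k] y ∈ x.spine := by
  obtain ⟨k, hk⟩ := x.isRootedForest.2 y
  exact ⟨k, (mem_singleton_iff.1 hk).trans x.getLast_spine.symm ▸ List.getLast_mem _⟩

theorem isRootedForest_piecewise {S : Set V} [DecidablePred (· ∈ S)]
    (hS : {y | y ∈ x.spine} = S) : IsRootedForest (S.piecewise id x.toFun) S :=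
  isRootedForest_piecewise_id fun y => hS ▸ x.exists_iterate_mem_spine y

theorem graft_spine {g : V → V} (hg : ∀ y ∉ x.spine, g y = x.toFun y) :
    graft x.spine g = x.toFun := by
  ext y
  by_cases hy : y ∈ x.spine
  · obtain ⟨i, hi, rfl⟩ := List.mem_iff_getElem.1 hy
    rw [graft_getElem x.spine_nodup]
    by_cases hlast : i + 1 < x.spine.length
    · rw [List.getD_eq_getElem _ _ hlast, getElem_spine, getElem_spine, iterate_succ_apply']
    · rw [List.getD_eq_default _ _ (by omega), x.getElem_spine_of_length_le hi (by omega),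
        x.isRootedForest.1 _ rfl]
  · rw [graft_of_notMem hy, hg y hy]

end Vertebrate

section Spine

variable [DecidableEq V] {l : List V} {r : V → V}

def graftVertebrate (hl : l.Nodup) (h : l ≠ []) (hr : IsRootedForest r {x | x ∈ l}) :
    Vertebrate V :=
  ⟨l.head h, l.getLast h, graft l r, isRootedForest_graft hl h hr⟩

theorem spine_graftVertebrate (hl : l.Nodup) (h : l ≠ []) (hr : IsRootedForest r {x | x ∈ l}) :
    (graftVertebrate hl h hr).spine = l := by
  have hlen : 0 < l.length := List.length_pos_iff.2 h
  have hfind :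
      Nat.find (graftVertebrate hl h hr).exists_iterate_start_eq_root = l.length - 1 := by
    refine (Nat.find_eq_iff _).2 ⟨?_, fun i hi => ?_⟩
    · simp only [graftVertebrate]
      rw [iterate_graft_head hl h (by omega), List.getLast_eq_getElem]
    · simp only [graftVertebrate]
      rw [iterate_graft_head hl h (by omega), List.getLast_eq_getElem]
      exact fun heq => by have := hl.getElem_inj_iff.1 heq; omega
  refine List.ext_getElem (by rw [Vertebrate.length_spine, hfind]; omega) fun i hi _ => ?_
  rw [Vertebrate.getElem_spine]
  exact iterate_graft_head hl h (by omega)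

noncomputable def spineEquiv [Nonempty V] (S : Set V) [DecidablePred (· ∈ S)] :
    {x : Vertebrate V // {y | y ∈ x.spine} = S} ≃
      {l : List V // l.Nodup ∧ {y | y ∈ l} = S} × {r : V → V // IsRootedForest r S} where
  toFun x := (⟨x.1.spine, x.1.spine_nodup, x.2⟩,
    ⟨S.piecewise id x.1.toFun, x.1.isRootedForest_piecewise x.2⟩)
  invFun p :=
    have hr : IsRootedForest p.2.1 {y | y ∈ p.1.1} := by rw [p.1.2.2]; exact p.2.2
    have hne : p.1.1 ≠ [] := fun h => by simpa [h] using hr.nonempty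
    ⟨graftVertebrate p.1.2.1 hne hr, by rw [spine_graftVertebrate]; exact p.1.2.2⟩
  left_inv x := by
    obtain ⟨x, rfl⟩ := x
    refine Subtype.ext (Vertebrate.ext x.head_spine x.getLast_spine (x.graft_spine fun y hy => ?_))
    exact piecewise_eq_of_notMem _ _ _ hy
  right_inv p := by
    obtain ⟨⟨l, hl, rfl⟩, r, hr⟩ := p
    refine Prod.ext (Subtype.ext ?_) (Subtype.ext ?_)
    · exact spine_graftVertebrate hl _ hr
    · exact hr.piecewise_id_eq fun y hy => graft_of_notMem hy

theorem card_nodup_list_eq_factorial (S : Set V) [Finite S] :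
    Nat.card {l : List V // l.Nodup ∧ {y | y ∈ l} = S} = (Nat.card S)! := by
  have := Fintype.ofFinite S
  set t := S.toFinset.toList
  have ht : t.Nodup := Finset.nodup_toList _
  have hmem : ∀ l : List V, l.Nodup ∧ {y | y ∈ l} = S ↔ l ∈ t.permutations.toFinset := by
    intro l
    rw [List.mem_toFinset, List.mem_permutations]
    constructor
    · rintro ⟨hl, rfl⟩
      exact (List.perm_ext_iff_of_nodup hl ht).2 (by simp [t])
    · intro h
      exact ⟨h.nodup_iff.2 ht, Set.ext fun y => by simp [h.mem_iff, t]⟩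
  rw [Nat.card_congr (Equiv.subtypeEquivRight hmem), Nat.card_eq_fintype_card, Fintype.card_coe,
    List.toFinset_card_of_nodup (List.nodup_permutations _ ht), List.length_permutations,
    Finset.length_toList, Set.toFinset_card, Nat.card_eq_fintype_card]

end Spine

theorem card_vertebrate_eq_sum [Fintype V] [Nonempty V] :
    Nat.card (Vertebrate V) =
      ∑ S : Set V, (Nat.card S)! * Nat.card {r : V → V // IsRootedForest r S} := by
  classical
  rw [← Nat.card_congr (Equiv.sigmaFiberEquiv fun x : Vertebrate V => {y | y ∈ x.spine}),
    Nat.card_sigma]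
  refine Finset.sum_congr rfl fun S _ => ?_
  rw [Nat.card_congr (spineEquiv S), Nat.card_prod, card_nodup_list_eq_factorial]

def functionalGraph (f : V → V) : SimpleGraph V :=
  SimpleGraph.fromRel fun x y => f x = y

theorem functionalGraph_adj {f : V → V} {x y : V} :
    (functionalGraph f).Adj x y ↔ x ≠ y ∧ (f x = y ∨ f y = x) :=
  SimpleGraph.fromRel_adj ..

theorem reachable_iterate_functionalGraph (f : V → V) (x : V) (k : ℕ) :
    (functionalGraph f).Reachable x (f^[k] x) := by
  induction k with
  | zero => rfl
  | succ k ih =>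
    refine ih.trans ?_
    rw [iterate_succ_apply']
    by_cases hfix : f^[k] x = f (f^[k] x)
    · exact hfix ▸ .rfl
    · exact (functionalGraph_adj.2 ⟨hfix, .inl rfl⟩).reachable

theorem isTree_functionalGraph [Finite V] {f : V → V} {r : V} (hf : IsRootedForest f {r}) :
    (functionalGraph f).IsTree := by
  have hconn : (functionalGraph f).Connected := by
    have : Nonempty V := ⟨r⟩
    refine ⟨fun x y => ?_⟩
    obtain ⟨k, hk⟩ := hf.2 x
    obtain ⟨j, hj⟩ := hf.2 y
    exact ((reachable_iterate_functionalGraph f x k).trans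
      ((mem_singleton_iff.1 hk).trans (mem_singleton_iff.1 hj).symm ▸
        (reachable_iterate_functionalGraph f y j).symm))
  rw [SimpleGraph.isTree_iff_connected_and_card]
  refine ⟨hconn, le_antisymm ?_ hconn.card_vert_le_card_edgeSet_add_one⟩
  have hsub : (functionalGraph f).edgeSet ⊆ (fun x => s(x, f x)) '' (univ \ {r}) := by
    intro e he
    induction e using Sym2.ind with
    | h x y =>
      rw [SimpleGraph.mem_edgeSet, functionalGraph_adj] at he
      obtain ⟨hne, rfl | rfl⟩ := he
      · exact ⟨x, ⟨trivial, fun hx => hne (by rw [hx, hf.1 r rfl])⟩, rfl⟩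
      · exact ⟨y, ⟨trivial, fun hy => hne (by rw [hy, hf.1 r rfl])⟩, Sym2.eq_swap⟩
  rw [Nat.card_coe_set_eq, ← Set.ncard_univ, ← Set.ncard_sdiff_singleton_add_one (mem_univ r)]
  exact Nat.add_le_add_right ((Set.ncard_le_ncard hsub).trans Set.ncard_image_le) 1

theorem IsRootedForest.eq_of_functionalGraph_eq {f g : V → V} {r : V}
    (hf : IsRootedForest f {r}) (hg : IsRootedForest g {r})
    (h : functionalGraph f = functionalGraph g) : f = g := by
  -- The set where `f` and `g` disagree is `g`-invariant, but it does not contain the root.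
  have hstep : ∀ v, f v ≠ g v → f (g v) ≠ g (g v) := by
    intro v hv hgg
    have hvr : g v ≠ v := fun hfix => hv (by
      rw [mem_singleton_iff.1 (hg.mem_of_isFixedPt hfix), hf.1 r rfl, hg.1 r rfl])
    have hadj : (functionalGraph f).Adj v (g v) := h ▸ functionalGraph_adj.2 ⟨hvr.symm, .inl rfl⟩
    obtain ⟨-, hfv | hfgv⟩ := functionalGraph_adj.1 hadj
    · exact hv hfv
    · have hper : v ∈ periodicPts g := mk_mem_periodicPts two_pos (by
        show g (g v) = v
        rw [← hgg, hfgv])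
      exact hv (by
        rw [mem_singleton_iff.1 (hg.mem_of_mem_periodicPts hper), hf.1 r rfl, hg.1 r rfl])
  by_contra hne
  obtain ⟨v, hv⟩ := Function.ne_iff.1 hne
  have hbad : ∀ k, f (g^[k] v) ≠ g (g^[k] v) := by
    intro k
    induction k with
    | zero => exact hv
    | succ k ih => rw [iterate_succ_apply']; exact hstep _ ih
  obtain ⟨k, hk⟩ := hg.2 v
  exact hbad k (by rw [mem_singleton_iff.1 hk, hf.1 r rfl, hg.1 r rfl])

theorem exists_isRootedForest_functionalGraph_eq [Finite V] {G : SimpleGraph V} (hG : G.IsTree)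
    (r : V) : ∃ f, IsRootedForest f {r} ∧ functionalGraph f = G := by
  classical
  choose! p hp using fun v (hv : v ≠ r) => hG.connected.exists_adj_dist_add_one hv
  let f v := if v = r then r else p v
  have hadj : ∀ v, v ≠ f v → G.Adj v (f v) := fun v hv => by
    by_cases hvr : v = r
    · simp [f, hvr] at hv
    · simpa [f, hvr] using (hp v hvr).1
  have hroot : ∀ d v, G.dist v r = d → f^[d] v = r := by
    intro d
    induction d with
    | zero => exact fun v hv => ((hG.connected v r).dist_eq_zero_iff).1 hv
    | succ d ih =>
      intro v hv
      have hvr : v ≠ r := by rintro rfl; simp at hv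
      rw [iterate_succ_apply]
      exact ih _ (by simpa [f, hvr, hv] using (hp v hvr).2)
  have hf : IsRootedForest f {r} :=
    ⟨fun v hv => by simp [f, mem_singleton_iff.1 hv], fun v => ⟨_, hroot _ v rfl⟩⟩
  refine ⟨f, hf, (isTree_functionalGraph hf).eq_of_le hG fun x y hxy => ?_⟩
  obtain ⟨hne, rfl | rfl⟩ := functionalGraph_adj.1 hxy
  · exact hadj x hne
  · exact (hadj y hne.symm).symm

theorem card_isRootedForest_singleton [Finite V] (r : V) :
    Nat.card {f : V → V // IsRootedForest f {r}} = Nat.card {G : SimpleGraph V // G.IsTree} := by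
  refine Nat.card_eq_of_bijective (fun f => ⟨functionalGraph f.1, isTree_functionalGraph f.2⟩)
    ⟨fun f g h => Subtype.ext (f.2.eq_of_functionalGraph_eq g.2 (congrArg Subtype.val h)),
      fun G => ?_⟩
  obtain ⟨f, hf, hfG⟩ := exists_isRootedForest_functionalGraph_eq G.2 r
  exact ⟨⟨f, hf⟩, Subtype.ext hfG⟩

theorem card_vertebrate [Finite V] :
    Nat.card (Vertebrate V) =
      Nat.card V * (Nat.card V * Nat.card {G : SimpleGraph V // G.IsTree}) := by
  have := Fintype.ofFinite V
  simp [Nat.card_congr vertebrateEquiv, Nat.card_sigma, card_isRootedForest_singleton]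

theorem card_sq_mul_card_isTree [Finite V] [Nonempty V] :
    Nat.card V ^ 2 * Nat.card {G : SimpleGraph V // G.IsTree} = Nat.card V ^ Nat.card V := by
  have := Fintype.ofFinite V
  rw [← Nat.card_fun, card_fun_eq_sum, ← card_vertebrate_eq_sum, card_vertebrate]
  ring

theorem card_isTree [Finite V] [Nonempty V] :
    Nat.card {G : SimpleGraph V // G.IsTree} = Nat.card V ^ (Nat.card V - 2) := by
  have h := card_sq_mul_card_isTree (V := V)
  have hpos : 0 < Nat.card V := Nat.card_pos
  rcases Nat.lt_or_ge (Nat.card V) 2 with hlt | hge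
  · obtain hone : Nat.card V = 1 := by omega
    rw [hone] at h ⊢
    simpa using h
  · have hsplit : Nat.card V ^ Nat.card V = Nat.card V ^ 2 * Nat.card V ^ (Nat.card V - 2) := by
      rw [← pow_add]
      congr 1
      omega
    exact Nat.eq_of_mul_eq_mul_left (pow_pos hpos 2) (h.trans hsplit)

end Cayley

/-- The number of labeled trees (connected acyclic simple graphs) on the vertex set
`{1, …, n}` equals the number of functions from `{2, …, n-1}` to `{1, …, n}`, for `n ≥ 2`.
This bijective restatement of Cayley's formula underlies Remmel's cycle-breaking proof. -/
theorem cayley_bijective_form (n : ℕ) (hn : 2 ≤ n) :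
    Nat.card {G : SimpleGraph (Fin n) // G.IsTree} =
    Nat.card ((Finset.Icc 2 (n - 1) : Finset ℕ) → (Finset.Icc 1 n : Finset ℕ)) := by
  have : Nonempty (Fin n) := ⟨⟨0, by omega⟩⟩
  rw [Cayley.card_isTree, Nat.card_fun, Nat.card_fin, Nat.card_eq_fintype_card,
    Nat.card_eq_fintype_card (α := Finset.Icc 2 (n - 1)), Fintype.card_coe, Fintype.card_coe,
    Nat.card_Icc, Nat.card_Icc, Nat.sub_add_cancel (by omega : 1 ≤ n), Nat.add_sub_cancel]
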